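/- arXiv:2312.10413 — 5 statements merged into one kernel-verified Lean document; each statement's English description precedes it below -/
import Mathlib

section
/- Let k >= 1. A self-complementary split graph G on 4k vertices has a unique split partition, namely K = {v : d(v) >= 2k} and I = {v : d(v) < 2k}, where d(v) denotes the degree of v in G. -/
/-!
An isomorphism `G ≃g Gᶜ` sends a vertex of degree `d` to one of degree `4k - 1 - d`, so it swaps
the vertices of degree at least `2k` with those of degree less than `2k`: exactly `2k` vertices
have degree at least `2k`. In a split partition `(K, I)` every clique vertex has degree at least
`|K| - 1` and every independent vertex degree at most `|K|`; measured against these `2k` vertices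
this forces `K` to be exactly the set of them.
-/

open SimpleGraph

noncomputable def deg {V : Type*} (G : SimpleGraph V) (v : V) : ℕ := (G.neighborSet v).ncard

noncomputable def degMultiset {V : Type*} [Finite V] (G : SimpleGraph V) : Multiset ℕ :=
  letI := Fintype.ofFinite V
  Finset.univ.val.map fun v => deg G v

def IsSelfCompl {V : Type*} (G : SimpleGraph V) : Prop := Nonempty (G ≃g Gᶜ)

def ForciblySC (τ : Multiset ℕ) : Prop :=
  ∀ G : SimpleGraph (Fin (Multiset.card τ)), degMultiset G = τ → IsSelfCompl G

def IsSplitPartition {V : Type*} (G : SimpleGraph V) (K I : Set V) : Prop :=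
  Disjoint K I ∧ K ∪ I = Set.univ ∧ G.IsClique K ∧ ∀ u ∈ I, ∀ v ∈ I, ¬ G.Adj u v

def IsSplit {V : Type*} (G : SimpleGraph V) : Prop := ∃ K I, IsSplitPartition G K I

section Degree

variable {V W : Type*}

lemma deg_compl_add_deg [Finite V] (G : SimpleGraph V) (v : V) :
    deg Gᶜ v + deg G v + 1 = Nat.card V := by
  have hunion := congrArg Set.ncard (G.neighborSet_union_compl_neighborSet_eq v)
  rw [Set.ncard_union_eq (G.compl_neighborSet_disjoint v), Set.ncard_compl,
    Set.ncard_singleton] at hunion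
  have : 0 < Nat.card V := Nat.card_pos_iff.mpr ⟨⟨v⟩, inferInstance⟩
  unfold deg
  omega

lemma SimpleGraph.Iso.deg_apply {G : SimpleGraph V} {H : SimpleGraph W} (e : G ≃g H) (v : V) :
    deg H (e v) = deg G v := by
  rw [deg, ← e.image_neighborSet, Set.ncard_image_of_injective _ e.injective, deg]

lemma SimpleGraph.Iso.deg_apply_add_deg [Finite V] {G : SimpleGraph V} (e : G ≃g Gᶜ) (v : V) :
    deg G (e v) + deg G v + 1 = Nat.card V := by
  rw [← e.deg_apply v, add_comm (deg G (e v))]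
  exact deg_compl_add_deg G (e v)

end Degree

namespace IsSelfCompl

variable {V : Type*} [Finite V] {G : SimpleGraph V}

lemma ncard_setOf_le_deg (hG : IsSelfCompl G) {m : ℕ} (hV : Nat.card V = 2 * m) :
    {v | m ≤ deg G v}.ncard = m := by
  obtain ⟨e⟩ := hG
  set S := {v | m ≤ deg G v}
  have hpre : e ⁻¹' Sᶜ = S := by
    ext v
    have := e.deg_apply_add_deg v
    simp only [S, Set.mem_preimage, Set.mem_compl_iff, Set.mem_ofPred_eq]
    omega
  have hcompl : S.ncard = Sᶜ.ncard := by
    have := Set.ncard_preimage_of_injective_subset_range (s := Sᶜ) e.injective (by simp)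
    rwa [hpre] at this
  have := Set.ncard_add_ncard_compl S
  omega

end IsSelfCompl

namespace IsSplitPartition

variable {V : Type*} {G : SimpleGraph V} {K I : Set V}

lemma compl_eq (h : IsSplitPartition G K I) : Kᶜ = I :=
  (isCompl_iff.mpr ⟨h.1, codisjoint_iff.mpr h.2.1⟩).compl_eq

lemma neighborSet_subset (h : IsSplitPartition G K I) {u : V} (hu : u ∈ I) :
    G.neighborSet u ⊆ K := by
  intro w hw
  by_contra hwK
  exact h.2.2.2 u hu w (h.compl_eq ▸ hwK) hw

lemma subset_insert_neighborSet (h : IsSplitPartition G K I) {v : V} (hv : v ∈ K) :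
    K ⊆ insert v (G.neighborSet v) := by
  intro w hw
  by_cases hwv : w = v
  · exact Or.inl hwv
  · exact Or.inr (h.2.2.1 hv hw (Ne.symm hwv))

variable [Finite V]

lemma ncard_le_deg_add_one (h : IsSplitPartition G K I) {v : V} (hv : v ∈ K) :
    K.ncard ≤ deg G v + 1 :=
  (Set.ncard_le_ncard (h.subset_insert_neighborSet hv)).trans (Set.ncard_insert_le _ _)

lemma ncard_le_deg_of_adj (h : IsSplitPartition G K I) {u v : V} (hv : v ∈ K) (hu : u ∈ I)
    (hadj : G.Adj v u) : K.ncard ≤ deg G v := by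
  have hsub : K ⊆ insert v (G.neighborSet v \ {u}) := by
    intro w hw
    rcases h.subset_insert_neighborSet hv hw with rfl | hw'
    · exact Set.mem_insert _ _
    · refine Or.inr ⟨hw', ?_⟩
      rintro rfl
      exact Set.disjoint_left.mp h.1 hw hu
  calc K.ncard ≤ (G.neighborSet v \ {u}).ncard + 1 :=
        (Set.ncard_le_ncard hsub).trans (Set.ncard_insert_le _ _)
    _ = deg G v := Set.ncard_sdiff_singleton_add_one hadj

lemma deg_le_ncard (h : IsSplitPartition G K I) {u : V} (hu : u ∈ I) : deg G u ≤ K.ncard :=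
  Set.ncard_le_ncard (h.neighborSet_subset hu)

lemma deg_lt_ncard_of_not_adj (h : IsSplitPartition G K I) {u v : V} (hu : u ∈ I) (hv : v ∈ K)
    (hnadj : ¬ G.Adj u v) : deg G u < K.ncard :=
  Set.ncard_lt_ncard ((Set.ssubset_iff_of_subset (h.neighborSet_subset hu)).mpr ⟨v, hv, hnadj⟩)

/-- The degree bounds `|K| - 1 ≤ d(v)` on the clique and `d(u) ≤ |K|` on the independent set
put `K` inside, resp. `I` outside, the `m` vertices of degree at least `m` as soon as `|K| > m`,
resp. `|K| < m`. -/
lemma ncard_eq_of_ncard_setOf_le_deg (h : IsSplitPartition G K I) {m : ℕ}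
    (hS : {v | m ≤ deg G v}.ncard = m) : K.ncard = m := by
  set S := {v | m ≤ deg G v}
  have hScard := Set.ncard_add_ncard_compl S
  have hKcard := Set.ncard_add_ncard_compl K
  rw [h.compl_eq] at hKcard
  have hKle : K.ncard ≤ m := by
    by_contra! hlt
    have hKS : K ⊆ S := fun v hv => by
      have := h.ncard_le_deg_add_one hv
      simp only [S, Set.mem_ofPred_eq]
      omega
    have := Set.ncard_le_ncard hKS
    omega
  have hKge : m ≤ K.ncard := by
    by_contra! hlt
    have hIS : I ⊆ Sᶜ := fun u hu => by
      have := h.deg_le_ncard hu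
      simp only [S, Set.mem_compl_iff, Set.mem_ofPred_eq]
      omega
    have := Set.ncard_le_ncard hIS
    omega
  omega

/-- A clique vertex of degree `m - 1 = |K| - 1` has no neighbour in `I`, which pushes every vertex
of `I` below degree `m` as well: too many vertices of low degree. -/
lemma eq_setOf_deg (h : IsSplitPartition G K I) {m : ℕ} (hS : {v | m ≤ deg G v}.ncard = m) :
    K = {v | m ≤ deg G v} ∧ I = {v | deg G v < m} := by
  set S := {v | m ≤ deg G v}
  have hScompl : Sᶜ = {v | deg G v < m} := by ext; simp [S, not_le]
  have hScard := Set.ncard_add_ncard_compl S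
  have hKcard := Set.ncard_add_ncard_compl K
  rw [h.compl_eq] at hKcard
  have hK := h.ncard_eq_of_ncard_setOf_le_deg hS
  have hKS : K ⊆ S := by
    intro v hv
    by_contra hvS
    have hIlow : ∀ u ∈ I, deg G u < m := fun u hu =>
      hK ▸ h.deg_lt_ncard_of_not_adj hu hv fun hadj =>
        hvS (hK ▸ h.ncard_le_deg_of_adj hv hu hadj.symm : m ≤ deg G v)
    have hsub : insert v I ⊆ Sᶜ := by
      rintro u (rfl | hu)
      · exact hvS
      · exact hScompl ▸ hIlow u hu
    have := Set.ncard_le_ncard hsub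
    rw [Set.ncard_insert_of_notMem (Set.disjoint_left.mp h.1 hv)] at this
    omega
  have hKeq : K = S := Set.eq_of_subset_of_ncard_le hKS (by omega)
  exact ⟨hKeq, by rw [← h.compl_eq, hKeq, hScompl]⟩

end IsSplitPartition

theorem unique_split_partition_general (k : ℕ) (G : SimpleGraph (Fin (4 * k)))
    (hsplit : IsSplit G) (hsc : IsSelfCompl G) :
    IsSplitPartition G {v | 2 * k ≤ deg G v} {v | deg G v < 2 * k} ∧
    ∀ K I : Set (Fin (4 * k)), IsSplitPartition G K I →
      K = {v | 2 * k ≤ deg G v} ∧ I = {v | deg G v < 2 * k} := by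
  have hS : {v | 2 * k ≤ deg G v}.ncard = 2 * k :=
    hsc.ncard_setOf_le_deg (by rw [Nat.card_fin]; ring)
  obtain ⟨K, I, h⟩ := hsplit
  obtain ⟨rfl, rfl⟩ := h.eq_setOf_deg hS
  exact ⟨h, fun K I h' => h'.eq_setOf_deg hS⟩

/-- For `k ≥ 1`, a self-complementary split graph `G` on `4k` vertices
has a unique split partition, namely `K = {v : d(v) ≥ 2k}` and `I = {v : d(v) < 2k}`. -/
theorem unique_split_partition (k : ℕ) (hk : 1 ≤ k) (G : SimpleGraph (Fin (4 * k)))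
    (hsplit : IsSplit G) (hsc : IsSelfCompl G) :
    IsSplitPartition G {v | 2 * k ≤ deg G v} {v | deg G v < 2 * k} ∧
    ∀ K I : Set (Fin (4 * k)), IsSplitPartition G K I →
      K = {v | 2 * k ≤ deg G v} ∧ I = {v | deg G v < 2 * k} :=
  unique_split_partition_general k G hsplit hsc
end

section
/- Let G be a self-complementary pseudo-split graph with a pseudo-split partition K disjoint-union I disjoint-union C. If C is nonempty, then the induced subgraph G - C is a self-complementary split graph of even order. -/
open SimpleGraph

/-- A pseudo-split partition: a partition of the vertex set into a clique `K`, an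
independent set `I`, and a (possibly empty) set `C` that induces a 5-cycle, is
complete to `K`, and is nonadjacent to `I`. -/
def IsPseudoSplitPartition {V : Type*} (G : SimpleGraph V) (K I C : Set V) : Prop :=
  Disjoint K I ∧ Disjoint K C ∧ Disjoint I C ∧ K ∪ I ∪ C = Set.univ ∧
  G.IsClique K ∧ (∀ u ∈ I, ∀ v ∈ I, ¬ G.Adj u v) ∧
  (C = ∅ ∨ (Nonempty (G.induce C ≃g SimpleGraph.cycleGraph 5) ∧
    (∀ u ∈ C, ∀ v ∈ K, G.Adj u v) ∧ (∀ u ∈ C, ∀ v ∈ I, ¬ G.Adj u v)))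

/-- A pseudo-split graph: a graph admitting a pseudo-split partition. -/
def IsPseudoSplit {V : Type*} (G : SimpleGraph V) : Prop :=
  ∃ K I C, IsPseudoSplitPartition G K I C

/-! An isomorphism `φ : G ≃g Gᶜ` turns the pseudo-split partition `K ⊎ I ⊎ C` of `G` into the
pseudo-split partition `φ⁻¹ I ⊎ φ⁻¹ K ⊎ φ⁻¹ C` of `G`, since complementation swaps the clique and
the independent set and keeps a 5-cycle a 5-cycle. A nonempty 5-cycle part is determined by the
graph, so `φ` fixes `C` and restricts to an isomorphism between `G - C` and its complement.
Self-complementary graphs have order `0` or `1` mod `4`; for both `n = |G - C|` and `n + 5` this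
forces `n ≡ 0` mod `4`. -/

open Finset

namespace SimpleGraph

variable {V W : Type*}

lemma induce_compl (G : SimpleGraph V) (s : Set V) : Gᶜ.induce s = (G.induce s)ᶜ := by
  ext a b
  simp [Subtype.ext_iff]

def Iso.compl {G : SimpleGraph V} {H : SimpleGraph W} (e : G ≃g H) : Gᶜ ≃g Hᶜ :=
  { e.toEquiv with map_rel_iff' := by simp [e.injective.ne_iff, e.map_adj_iff] }

lemma card_edgeFinset_add_card_edgeFinset_compl [Fintype V] [DecidableEq V] (G : SimpleGraph V)
    [DecidableRel G.Adj] : #G.edgeFinset + #Gᶜ.edgeFinset = (Fintype.card V).choose 2 := by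
  rw [← card_edgeFinset_top_eq_card_choose_two, ← card_union_of_disjoint, ← edgeFinset_sup]
  · congr 1
    ext e
    rw [mem_edgeFinset, mem_edgeFinset, sup_compl_eq_top]
  · exact disjoint_edgeFinset.mpr disjoint_compl_right

/-- `i ↦ 2 i` turns the differences `±2` of non-adjacent vertices into `±1`. -/
def cycleGraphFiveComplIso : (cycleGraph 5)ᶜ ≃g cycleGraph 5 where
  toFun i := 2 * i
  invFun i := 3 * i
  left_inv := by decide
  right_inv := by decide
  map_rel_iff' := by decide

lemma cycleGraph_five_not_triangle (a b c : Fin 5) :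
    (cycleGraph 5).Adj a b → (cycleGraph 5).Adj b c → ¬(cycleGraph 5).Adj a c := by
  revert a b c; decide

end SimpleGraph

section CycleFive

variable {V : Type*} {G : SimpleGraph V} {C : Set V} (e : G.induce C ≃g cycleGraph 5)
include e

lemma ncard_eq_five_of_iso_cycleGraph : C.ncard = 5 := by
  rw [← Nat.card_coe_set_eq, Nat.card_congr e.toEquiv, Nat.card_fin]

lemma ncard_inter_le_two_of_isClique {S : Set V} (hS : G.IsClique S) : (C ∩ S).ncard ≤ 2 := by
  have hfin : (C ∩ S).Finite :=
    (Set.finite_of_ncard_pos (by rw [ncard_eq_five_of_iso_cycleGraph e]; norm_num)).inter_of_left S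
  by_contra! h
  obtain ⟨a, ha, b, hb, c, hc, hab, hac, hbc⟩ := (Set.two_lt_ncard hfin).mp h
  have adj {x y : V} (hx : x ∈ C ∩ S) (hy : y ∈ C ∩ S) (hxy : x ≠ y) :
      (cycleGraph 5).Adj (e ⟨x, hx.1⟩) (e ⟨y, hy.1⟩) :=
    e.map_adj_iff.mpr (hS hx.2 hy.2 hxy)
  exact cycleGraph_five_not_triangle _ _ _ (adj ha hb hab) (adj hb hc hbc) (adj ha hc hac)

lemma ncard_inter_neighborSet_le_two {u : V} (hu : u ∈ C) :
    (C ∩ G.neighborSet u).ncard ≤ 2 := by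
  have hsub : C ∩ G.neighborSet u ⊆
      (fun i ↦ (e.symm i : V)) '' (cycleGraph 5).neighborSet (e ⟨u, hu⟩) := by
    rintro v ⟨hv, huv⟩
    exact ⟨e ⟨v, hv⟩, e.map_adj_iff.mpr huv, by simp⟩
  calc (C ∩ G.neighborSet u).ncard
      ≤ ((fun i ↦ (e.symm i : V)) '' (cycleGraph 5).neighborSet (e ⟨u, hu⟩)).ncard :=
        Set.ncard_le_ncard hsub (Set.toFinite _)
    _ ≤ ((cycleGraph 5).neighborSet (e ⟨u, hu⟩)).ncard := Set.ncard_image_le (Set.toFinite _)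
    _ ≤ 2 := by
        rw [cycleGraph_neighborSet]
        exact (Set.ncard_insert_le _ _).trans (by rw [Set.ncard_singleton])

end CycleFive

namespace IsPseudoSplitPartition

variable {V W : Type*} {G : SimpleGraph V} {K I C : Set V}

lemma mem (h : IsPseudoSplitPartition G K I C) (v : V) : v ∈ K ∨ v ∈ I ∨ v ∈ C := by
  have hv : v ∈ K ∪ I ∪ C := h.2.2.2.1 ▸ Set.mem_univ v
  simpa only [Set.mem_union, or_assoc] using hv

lemma union_eq_compl (h : IsPseudoSplitPartition G K I C) : K ∪ I = Cᶜ :=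
  (IsCompl.of_eq (h.2.1.union_left h.2.2.1).eq_bot h.2.2.2.1).eq_compl

lemma isClique (h : IsPseudoSplitPartition G K I C) : G.IsClique K := h.2.2.2.2.1

lemma cycle_of_nonempty (h : IsPseudoSplitPartition G K I C) (hC : C.Nonempty) :
    Nonempty (G.induce C ≃g cycleGraph 5) ∧ (∀ u ∈ C, ∀ v ∈ K, G.Adj u v) ∧
      ∀ u ∈ C, ∀ v ∈ I, ¬ G.Adj u v :=
  h.2.2.2.2.2.2.resolve_left hC.ne_empty

lemma isSplit_induce (h : IsPseudoSplitPartition G K I C) : IsSplit (G.induce (K ∪ I)) := by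
  obtain ⟨hKI, -, -, -, hK, hI, -⟩ := h
  refine ⟨Subtype.val ⁻¹' K, Subtype.val ⁻¹' I, hKI.preimage _, ?_, ?_, ?_⟩
  · exact Set.eq_univ_of_forall fun x ↦ x.2
  · exact fun x hx y hy hxy ↦ hK hx hy (Subtype.val_injective.ne hxy)
  · exact fun x hx y hy ↦ hI x hx y hy

lemma compl (h : IsPseudoSplitPartition G K I C) : IsPseudoSplitPartition Gᶜ I K C := by
  obtain ⟨hKI, hKC, hIC, huniv, hK, hI, hC⟩ := h
  refine ⟨hKI.symm, hIC, hKC, by rwa [Set.union_comm I K], fun u hu v hv huv ↦ ⟨huv, hI u hu v hv⟩,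
    fun u hu v hv huv ↦ huv.2 (hK hu hv huv.1), hC.imp_right ?_⟩
  rintro ⟨⟨e⟩, hCK, hCI⟩
  refine ⟨⟨?_⟩, fun u hu v hv ↦ ⟨?_, hCI u hu v hv⟩, fun u hu v hv huv ↦ huv.2 (hCK u hu v hv)⟩
  · rw [induce_compl]
    exact e.compl.trans cycleGraphFiveComplIso
  · rintro rfl
    exact hIC.ne_of_mem hv hu rfl

lemma comap {H : SimpleGraph W} {K I C : Set W} (φ : G ≃g H)
    (h : IsPseudoSplitPartition H K I C) :
    IsPseudoSplitPartition G (φ ⁻¹' K) (φ ⁻¹' I) (φ ⁻¹' C) := by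
  obtain ⟨hKI, hKC, hIC, huniv, hK, hI, hC⟩ := h
  refine ⟨hKI.preimage _, hKC.preimage _, hIC.preimage _, by simp [← Set.preimage_union, huniv],
    fun u hu v hv huv ↦ φ.map_adj_iff.mp (hK hu hv (φ.injective.ne huv)),
    fun u hu v hv huv ↦ hI _ hu _ hv (φ.map_adj_iff.mpr huv), ?_⟩
  rcases hC with hC | ⟨⟨e⟩, hCK, hCI⟩
  · exact .inl (by simp [hC])
  · exact .inr ⟨⟨(φ.induce φ.bijective.bijOn_preimage).trans e⟩,
      fun u hu v hv ↦ φ.map_adj_iff.mp (hCK _ hu _ hv),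
      fun u hu v hv huv ↦ hCI _ hu _ hv (φ.map_adj_iff.mpr huv)⟩

variable [Finite V] {K₁ I₁ C₁ K₂ I₂ C₂ : Set V}

/-- A vertex of `C₁` in the clique `K₂` would see all five vertices of the 5-cycle `C₂`; but at
most two of them lie in the clique `K₁`, none in `I₁`, and at most two in `C₁`. -/
lemma notMem_clique_of_mem_cycle (h₁ : IsPseudoSplitPartition G K₁ I₁ C₁)
    (h₂ : IsPseudoSplitPartition G K₂ I₂ C₂) (hC₁ : C₁.Nonempty) (hC₂ : C₂.Nonempty) {u : V}
    (hu : u ∈ C₁) : u ∉ K₂ := by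
  intro huK
  obtain ⟨⟨e₁⟩, -, hC₁I⟩ := h₁.cycle_of_nonempty hC₁
  obtain ⟨⟨e₂⟩, hC₂K, -⟩ := h₂.cycle_of_nonempty hC₂
  have hcover : C₂ ⊆ (C₂ ∩ K₁) ∪ (C₁ ∩ G.neighborSet u) := by
    intro v hv
    have huv : G.Adj u v := (hC₂K v hv u huK).symm
    rcases h₁.mem v with hvK | hvI | hvC
    · exact .inl ⟨hv, hvK⟩
    · exact absurd huv (hC₁I u hu v hvI)
    · exact .inr ⟨hvC, huv⟩
  have := (Set.ncard_le_ncard hcover (Set.toFinite _)).trans (Set.ncard_union_le _ _)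
  have := ncard_inter_le_two_of_isClique e₂ h₁.isClique
  have := ncard_inter_neighborSet_le_two e₁ hu
  have := ncard_eq_five_of_iso_cycleGraph e₂
  omega

lemma cycle_subset (h₁ : IsPseudoSplitPartition G K₁ I₁ C₁)
    (h₂ : IsPseudoSplitPartition G K₂ I₂ C₂) (hC₁ : C₁.Nonempty) (hC₂ : C₂.Nonempty) :
    C₁ ⊆ C₂ := by
  intro u hu
  rcases h₂.mem u with huK | huI | huC
  · exact absurd huK (h₁.notMem_clique_of_mem_cycle h₂ hC₁ hC₂ hu)
  · exact absurd huI (h₁.compl.notMem_clique_of_mem_cycle h₂.compl hC₁ hC₂ hu)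
  · exact huC

lemma cycle_eq (h₁ : IsPseudoSplitPartition G K₁ I₁ C₁) (h₂ : IsPseudoSplitPartition G K₂ I₂ C₂)
    (hC₁ : C₁.Nonempty) (hC₂ : C₂.Nonempty) : C₁ = C₂ :=
  (h₁.cycle_subset h₂ hC₁ hC₂).antisymm (h₂.cycle_subset h₁ hC₂ hC₁)

end IsPseudoSplitPartition

namespace IsSelfCompl

variable {V : Type*} {G : SimpleGraph V}

lemma induce {s : Set V} (φ : G ≃g Gᶜ) (hs : φ ⁻¹' s = s) : IsSelfCompl (G.induce s) := by
  have hφ := φ.bijective.bijOn_preimage (t := s)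
  rw [hs] at hφ
  rw [IsSelfCompl, ← induce_compl]
  exact ⟨φ.induce hφ⟩

lemma card_mod_four [Finite V] (h : IsSelfCompl G) : Nat.card V % 4 = 0 ∨ Nat.card V % 4 = 1 := by
  classical
  have := Fintype.ofFinite V
  obtain ⟨φ⟩ := h
  have hchoose : (Nat.card V).choose 2 = 2 * #G.edgeFinset := by
    rw [Nat.card_eq_fintype_card, ← card_edgeFinset_add_card_edgeFinset_compl G,
      ← φ.card_edgeFinset_eq, two_mul]
  have hmul : Nat.card V * (Nat.card V - 1) = 4 * #G.edgeFinset := by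
    rw [← Nat.div_two_mul_two_of_even (Nat.even_mul_pred_self _), ← Nat.choose_two_right,
      hchoose]
    ring
  generalize Nat.card V = n at hmul ⊢
  have hmod := congrArg (· % 4) hmul
  simp only [Nat.mul_mod n, Nat.mul_mod_right] at hmod
  have : n % 4 < 4 := Nat.mod_lt _ (by norm_num)
  interval_cases hn : n % 4 <;> omega

end IsSelfCompl

/-- Let `G` be a self-complementary pseudo-split graph with a
pseudo-split partition `K ⊎ I ⊎ C`.  If `C` is nonempty, then the induced subgraph
`G - C` is a self-complementary split graph of even order. -/
theorem pseudoSplit_remove_C5 {V : Type*} [Finite V] (G : SimpleGraph V)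
    (K I C : Set V) (hpart : IsPseudoSplitPartition G K I C)
    (hsc : IsSelfCompl G) (hC : C.Nonempty) :
    IsSelfCompl (G.induce (K ∪ I)) ∧ IsSplit (G.induce (K ∪ I)) ∧
    Even (Nat.card ↥(K ∪ I)) := by
  obtain ⟨φ⟩ := hsc
  have hφC : ⇑φ ⁻¹' C = C :=
    (hpart.compl.comap φ).cycle_eq hpart (hC.preimage φ.surjective) hC
  have hφ : ⇑φ ⁻¹' (K ∪ I) = K ∪ I := by
    rw [hpart.union_eq_compl, Set.preimage_compl, hφC]
  have hsc' := IsSelfCompl.induce φ hφ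
  refine ⟨hsc', hpart.isSplit_induce, ?_⟩
  obtain ⟨⟨e⟩, -⟩ := hpart.cycle_of_nonempty hC
  have hcard : Nat.card ↥(K ∪ I) + 5 = Nat.card V := by
    rw [← ncard_eq_five_of_iso_cycleGraph e, Nat.card_coe_set_eq, hpart.union_eq_compl, add_comm,
      Set.ncard_add_ncard_compl]
  have := hsc'.card_mod_four
  have := IsSelfCompl.card_mod_four ⟨φ⟩
  rw [Nat.even_iff]
  omega
end

section
/- A self-complementary split graph admits a rectangle partition if and only if it is isomorphic to Z_k for some k >= 1. -/
open SimpleGraph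

/-- A rectangle partition: a partition of the vertex set into four nonempty parts such
that `V1` is complete to `V2` and nonadjacent to `V3`, while `V4` is complete to `V3`
and nonadjacent to `V2`. -/
def IsRectanglePartition {V : Type*} (G : SimpleGraph V) (V1 V2 V3 V4 : Set V) : Prop :=
  V1.Nonempty ∧ V2.Nonempty ∧ V3.Nonempty ∧ V4.Nonempty ∧
  Disjoint V1 V2 ∧ Disjoint V1 V3 ∧ Disjoint V1 V4 ∧
  Disjoint V2 V3 ∧ Disjoint V2 V4 ∧ Disjoint V3 V4 ∧
  V1 ∪ V2 ∪ V3 ∪ V4 = Set.univ ∧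
  (∀ u ∈ V1, ∀ v ∈ V2, G.Adj u v) ∧ (∀ u ∈ V1, ∀ v ∈ V3, ¬ G.Adj u v) ∧
  (∀ u ∈ V4, ∀ v ∈ V3, G.Adj u v) ∧ (∀ u ∈ V4, ∀ v ∈ V2, ¬ G.Adj u v)

/-- The graph `Z_k`, obtained from the path `P4` (with vertices `0 - 1 - 2 - 3`) by
substituting each degree-one vertex (`0` and `3`) with an independent set of `k`
vertices and each degree-two vertex (`1` and `2`) with a clique of `k` vertices. -/
def Zgraph (k : ℕ) : SimpleGraph (Fin 4 × Fin k) :=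
  SimpleGraph.fromRel fun u v =>
    (u.1 = v.1 ∧ (u.1.val = 1 ∨ u.1.val = 2)) ∨
    u.1.val + 1 = v.1.val ∨ v.1.val + 1 = u.1.val

/-! In a split graph, a rectangle partition puts two opposite parts into the clique
and the other two into the independent set, so the graph is a blow-up of `P4 = 0 - 1 - 2 - 3`
in which the inner fibres are cliques and the outer ones independent sets. With fibre sizes
`a, b, c, d` the degrees on the four fibres are `b, a + b + c - 1, b + c + d - 1, c`.
A self-complementary graph on `n` vertices has as many vertices of degree `s` as of degree
`n - 1 - s`; applied to the degrees of the inner fibres this forces `a = d` and then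
`a = b = c`. Blow-ups of the same pattern with equal fibre sizes are isomorphic, which gives
`Z_k`. Conversely the four fibres of `Z_k` form a rectangle partition. -/

open Function

theorem Nat.card_subtype_fst_eq {α β : Type*} (a : α) :
    Nat.card {p : α × β // p.1 = a} = Nat.card β := by
  rw [Nat.card_congr (Equiv.prodSubtypeFstEquivSubtypeProd (p := (· = a))), Nat.card_prod]
  simp

section Fibres

variable {ι V : Type*} [Finite V] (f : V → ι)

theorem ncard_preimage_finset (s : Finset ι) :
    (f ⁻¹' s).ncard = ∑ i ∈ s, Nat.card {v // f v = i} := by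
  rw [← Nat.card_coe_set_eq]
  exact Finset.card_preimage_eq_sum_card_image_eq fun _ _ => Set.toFinite _

variable {f} in
theorem card_fiber_pos (hf : Surjective f) (i : ι) : 0 < Nat.card {v // f v = i} :=
  have ⟨v, hv⟩ := hf i
  Nat.card_pos_iff.mpr ⟨⟨⟨v, hv⟩⟩, inferInstance⟩

end Fibres

namespace SimpleGraph

variable {ι V W : Type*} {R : ι → ι → Prop}

theorem deg_add_deg_compl [Finite V] (G : SimpleGraph V) (v : V) :
    deg G v + deg Gᶜ v + 1 = Nat.card V := by
  have hv : v ∈ (G.neighborSet v)ᶜ := fun h => G.irrefl h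
  rw [deg, deg, neighborSet_compl, add_assoc, Set.ncard_sdiff_singleton_add_one hv,
    Set.ncard_add_ncard_compl]

theorem Iso.deg_apply_s6 {G : SimpleGraph V} {G' : SimpleGraph W} (e : G ≃g G') (v : V) :
    deg G' (e v) = deg G v := by
  rw [deg, deg, ← e.image_neighborSet, Set.ncard_image_of_injective _ e.injective]

def blowup (R : ι → ι → Prop) (f : V → ι) : SimpleGraph V :=
  fromRel fun u v => R (f u) (f v)

theorem blowup_adj [Std.Symm R] {f : V → ι} {u v : V} :
    (blowup R f).Adj u v ↔ u ≠ v ∧ R (f u) (f v) := by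
  simp only [blowup, fromRel_adj, or_iff_left_of_imp (Std.Symm.symm _ _)]

theorem Iso.eq_blowup {G : SimpleGraph V} {f : W → ι} (e : G ≃g blowup R f) :
    G = blowup R (f ∘ e) := by
  ext u v
  rw [← e.map_adj_iff]
  exact and_congr_left fun _ => e.injective.ne_iff

theorem nonempty_iso_blowup [Finite V] [Finite W] {f : V → ι} {g : W → ι}
    (h : ∀ i, Nat.card {v // f v = i} = Nat.card {w // g w = i}) :
    Nonempty (blowup R f ≃g blowup R g) := by
  obtain ⟨e, he⟩ : ∃ e : V ≃ W, ∀ v, g (e v) = f v :=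
    ⟨_, Equiv.ofFiberEquiv_map fun i => (Finite.card_eq.mp (h i)).some⟩
  exact ⟨⟨e, by simp [blowup, e.injective.eq_iff, he]⟩⟩

def blowupDegree [Fintype ι] (R : ι → ι → Prop) [DecidableRel R] (n : ι → ℕ) (i : ι) : ℕ :=
  ∑ j with R i j, n j - if R i i then 1 else 0

variable [Finite V] [Fintype ι] [DecidableRel R] [Std.Symm R]

theorem deg_blowup (f : V → ι) (v : V) :
    deg (blowup R f) v = blowupDegree R (fun i => Nat.card {w // f w = i}) (f v) := by
  have hnbr : (blowup R f).neighborSet v = f ⁻¹' ↑({j | R (f v) j} : Finset ι) \ {v} := by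
    ext w
    simp [blowup_adj, and_comm, eq_comm]
  rw [deg, hnbr, blowupDegree, ← ncard_preimage_finset]
  split_ifs with hv
  · exact Nat.eq_sub_of_add_eq (Set.ncard_sdiff_singleton_add_one (by simpa using hv))
  · rw [Set.sdiff_singleton_eq_self (by simpa using hv), Nat.sub_zero]

theorem ncard_deg_blowup (f : V → ι) (t : ℕ) :
    {v | deg (blowup R f) v = t}.ncard =
      ∑ i with blowupDegree R (fun i => Nat.card {w // f w = i}) i = t,
        Nat.card {w // f w = i} := by
  rw [← ncard_preimage_finset]
  congr 1
  ext v
  simp [deg_blowup]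

end SimpleGraph

open SimpleGraph

theorem IsSelfCompl.ncard_deg_eq {V : Type*} [Finite V] {G : SimpleGraph V}
    (hG : IsSelfCompl G) {s t : ℕ} (hst : s + t + 1 = Nat.card V) :
    {v | deg G v = s}.ncard = {v | deg G v = t}.ncard := by
  obtain ⟨φ⟩ := hG
  have hφ : ∀ v, deg G (φ v) + deg G v + 1 = Nat.card V := fun v => by
    rw [← φ.deg_apply_s6 v]
    exact deg_add_deg_compl G (φ v)
  have : {v | deg G v = s} = φ ⁻¹' {v | deg G v = t} := by
    ext v
    have := hφ v
    simp only [Set.mem_ofPred_eq, Set.mem_preimage]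
    omega
  rw [this, ← Set.ncard_image_of_injective _ φ.injective, Set.image_preimage_eq _ φ.surjective]

def zPattern (i j : Fin 4) : Prop :=
  (i = j ∧ (i.val = 1 ∨ i.val = 2)) ∨ i.val + 1 = j.val ∨ j.val + 1 = i.val

instance : DecidableRel zPattern := fun i j => by unfold zPattern; infer_instance

instance : Std.Symm zPattern := ⟨by decide⟩

theorem zgraph_eq_blowup (k : ℕ) : Zgraph k = blowup zPattern Prod.fst := rfl

theorem blowupDegree_zPattern (n : Fin 4 → ℕ) :
    blowupDegree zPattern n 0 = n 1 ∧ blowupDegree zPattern n 1 = n 0 + n 1 + n 2 - 1 ∧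
      blowupDegree zPattern n 2 = n 1 + n 2 + n 3 - 1 ∧ blowupDegree zPattern n 3 = n 2 := by
  simp [blowupDegree, Finset.sum_filter, Fin.sum_univ_four, zPattern]

theorem eq_of_zPattern_degree_symm (n : Fin 4 → ℕ) (hn : ∀ i, 1 ≤ n i)
    (hsymm : ∀ s t, s + t + 1 = ∑ i, n i →
      ∑ i with blowupDegree zPattern n i = s, n i = ∑ i with blowupDegree zPattern n i = t, n i) :
    ∀ i, n i = n 0 := by
  have := hn 0; have := hn 1; have := hn 2; have := hn 3
  have hsum : ∑ i, n i = n 0 + n 1 + n 2 + n 3 := Fin.sum_univ_four n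
  obtain ⟨d0, d1, d2, d3⟩ := blowupDegree_zPattern n
  have e1 := hsymm (n 0 + n 1 + n 2 - 1) (n 3) (by omega)
  have e2 := hsymm (n 1 + n 2 + n 3 - 1) (n 0) (by omega)
  simp only [Finset.sum_filter, Fin.sum_univ_four] at e1 e2
  rw [d0, d1, d2, d3] at e1 e2
  -- If `n 0 ≠ n 3`, the larger inner degree is attained on a single inner fibre, whose size
  -- the vertices of the complementary degree cannot match.
  have h03 : n 0 = n 3 := by
    rcases lt_trichotomy (n 0) (n 3) with h | h | h
    · simp (disch := omega) only [if_neg] at e2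
      split_ifs at e2 <;> omega
    · exact h
    · simp (disch := omega) only [if_neg] at e1
      split_ifs at e1 <;> omega
  simp (disch := omega) only [if_pos, if_neg] at e2
  obtain ⟨h10, h20⟩ : n 1 = n 0 ∧ n 2 = n 0 := by
    split_ifs at e2 <;> omega
  intro i
  fin_cases i <;> simp [h10, h20, h03]

section Partitions

variable {V : Type*} {G : SimpleGraph V} {K I X Y V1 V2 V3 V4 : Set V}

namespace IsSplitPartition

theorem subset_clique_of_forall_adj (hKI : IsSplitPartition G K I) (hY : (Y ∩ I).Nonempty)
    (h : ∀ x ∈ X, ∀ y ∈ Y, G.Adj x y) : X ⊆ K := by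
  obtain ⟨-, hcover, -, hI⟩ := hKI
  obtain ⟨y, hyY, hyI⟩ := hY
  intro x hx
  have : x ∈ K ∪ I := hcover ▸ Set.mem_univ x
  exact this.resolve_right fun hxI => hI x hxI y hyI (h x hx y hyY)

theorem subset_indep_of_forall_not_adj (hKI : IsSplitPartition G K I) (hXY : Disjoint X Y)
    (hY : (Y ∩ K).Nonempty) (h : ∀ x ∈ X, ∀ y ∈ Y, ¬ G.Adj x y) : X ⊆ I := by
  obtain ⟨-, hcover, hK, -⟩ := hKI
  obtain ⟨y, hyY, hyK⟩ := hY
  intro x hx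
  have : x ∈ K ∪ I := hcover ▸ Set.mem_univ x
  exact this.resolve_left fun hxK =>
    h x hx y hyY (hK hxK hyK fun hxy => hXY.ne_of_mem hx hyY hxy)

end IsSplitPartition

namespace IsRectanglePartition

theorem swap (h : IsRectanglePartition G V1 V2 V3 V4) : IsRectanglePartition G V2 V1 V4 V3 := by
  obtain ⟨h1, h2, h3, h4, d12, d13, d14, d23, d24, d34, hcover, a12, n13, a43, n42⟩ := h
  refine ⟨h2, h1, h4, h3, d12.symm, d24, d23, d14, d13, d34.symm, ?_,
    fun u hu v hv => (a12 v hv u hu).symm, fun u hu v hv huv => n42 v hv u hu huv.symm,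
    fun u hu v hv => (a43 v hv u hu).symm, fun u hu v hv huv => n13 v hv u hu huv.symm⟩
  rw [← hcover]
  ext v
  simp only [Set.mem_union]
  tauto

theorem subset_of_subset_indep (h : IsRectanglePartition G V1 V2 V3 V4)
    (hKI : IsSplitPartition G K I) (h1 : V1 ⊆ I) : V2 ⊆ K ∧ V3 ⊆ K ∧ V4 ⊆ I := by
  obtain ⟨hV1, hV2, -, hV4, -, -, -, -, d24, -, -, a12, -, a43, n42⟩ := h
  have h2 : V2 ⊆ K := hKI.subset_clique_of_forall_adj (hV1.mono fun v hv => ⟨hv, h1 hv⟩)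
    fun u hu v hv => (a12 v hv u hu).symm
  have h4 : V4 ⊆ I := hKI.subset_indep_of_forall_not_adj d24.symm
    (hV2.mono fun v hv => ⟨hv, h2 hv⟩) n42
  have h3 : V3 ⊆ K := hKI.subset_clique_of_forall_adj (hV4.mono fun v hv => ⟨hv, h4 hv⟩)
    fun u hu v hv => (a43 v hv u hu).symm
  exact ⟨h2, h3, h4⟩

theorem subset_indep_or_subset_indep (h : IsRectanglePartition G V1 V2 V3 V4)
    (hKI : IsSplitPartition G K I) : V1 ⊆ I ∨ V2 ⊆ I := by
  by_cases h1 : V1 ⊆ I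
  · exact Or.inl h1
  obtain ⟨u, hu1, huI⟩ := Set.not_subset.mp h1
  have huK : u ∈ K := (hKI.2.1 ▸ Set.mem_univ u : u ∈ K ∪ I).resolve_right huI
  obtain ⟨-, -, hV3, hV4, -, d13, -, -, d24, -, -, -, n13, a43, n42⟩ := h
  have h3 : V3 ⊆ I := hKI.subset_indep_of_forall_not_adj d13.symm ⟨u, hu1, huK⟩
    fun v hv w hw hvw => n13 w hw v hv hvw.symm
  have h4 : V4 ⊆ K := hKI.subset_clique_of_forall_adj (hV3.mono fun v hv => ⟨hv, h3 hv⟩) a43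
  exact Or.inr <| hKI.subset_indep_of_forall_not_adj d24 (hV4.mono fun v hv => ⟨hv, h4 hv⟩)
    fun v hv w hw hvw => n42 w hw v hv hvw.symm

theorem exists_surjective_forall_mem (h : IsRectanglePartition G V1 V2 V3 V4) :
    ∃ f : V → Fin 4, Surjective f ∧ ∀ v, v ∈ ![V1, V2, V3, V4] (f v) := by
  obtain ⟨hV1, hV2, hV3, hV4, d12, d13, d14, d23, d24, d34, hcover, -⟩ := h
  let P := IndexedPartition.mk' ![V1, V2, V3, V4]
    (fun i j hij => by fin_cases i <;> fin_cases j <;> simp_all [Function.onFun, disjoint_comm])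
    (fun i => by fin_cases i <;> assumption)
    (fun v => by
      have : v ∈ V1 ∪ V2 ∪ V3 ∪ V4 := hcover ▸ Set.mem_univ v
      simp only [Set.mem_union] at this
      rcases this with ((h | h) | h) | h
      exacts [⟨0, h⟩, ⟨1, h⟩, ⟨2, h⟩, ⟨3, h⟩])
  exact ⟨P.index, fun i => ⟨P.some i, P.index_some i⟩, P.mem_index⟩

theorem exists_eq_blowup_of_subset_indep (h : IsRectanglePartition G V1 V2 V3 V4)
    (hKI : IsSplitPartition G K I) (h1 : V1 ⊆ I) :
    ∃ f : V → Fin 4, Surjective f ∧ G = blowup zPattern f := by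
  obtain ⟨h2, h3, h4⟩ := h.subset_of_subset_indep hKI h1
  obtain ⟨f, hf, hmem⟩ := h.exists_surjective_forall_mem
  obtain ⟨-, -, -, -, -, -, -, -, -, -, -, a12, n13, a43, n42⟩ := h
  obtain ⟨-, -, hK, hI⟩ := hKI
  refine ⟨f, hf, ?_⟩
  ext u v
  rw [blowup_adj]
  have hu := hmem u
  have hv := hmem v
  generalize f u = i at hu ⊢
  generalize f v = j at hv ⊢
  fin_cases i <;> fin_cases j <;> simp [zPattern] at hu hv ⊢ <;>
    grind [Set.Pairwise, SimpleGraph.Adj.symm, SimpleGraph.Adj.ne]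

theorem exists_eq_blowup (hsplit : IsSplit G) (h : IsRectanglePartition G V1 V2 V3 V4) :
    ∃ f : V → Fin 4, Surjective f ∧ G = blowup zPattern f := by
  obtain ⟨K, I, hKI⟩ := hsplit
  rcases h.subset_indep_or_subset_indep hKI with h1 | h2
  · exact h.exists_eq_blowup_of_subset_indep hKI h1
  · exact h.swap.exists_eq_blowup_of_subset_indep hKI h2

end IsRectanglePartition

theorem isRectanglePartition_blowup {f : V → Fin 4} (hf : Surjective f) :
    IsRectanglePartition (blowup zPattern f) (f ⁻¹' {0}) (f ⁻¹' {1}) (f ⁻¹' {2}) (f ⁻¹' {3}) := by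
  refine ⟨hf 0, hf 1, hf 2, hf 3, ?_⟩
  simp +contextual [Set.disjoint_left, blowup_adj, zPattern]
  refine ⟨Set.eq_univ_of_forall fun v => ?_, ?_, ?_⟩
  · simpa [or_assoc] using (by decide : ∀ i : Fin 4, i = 0 ∨ i = 1 ∨ i = 2 ∨ i = 3) (f v)
  all_goals rintro u hu v hv rfl; simp_all

theorem IsSelfCompl.card_fiber_eq [Finite V] {f : V → Fin 4} (hf : Surjective f)
    (hsc : IsSelfCompl (blowup zPattern f)) (i : Fin 4) :
    Nat.card {v // f v = i} = Nat.card {v // f v = 0} := by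
  refine eq_of_zPattern_degree_symm (fun i => Nat.card {v // f v = i}) (card_fiber_pos hf)
    (fun s t hst => ?_) i
  rw [← ncard_deg_blowup, ← ncard_deg_blowup]
  refine hsc.ncard_deg_eq (hst.trans ?_)
  rw [← ncard_preimage_finset, Finset.coe_univ, Set.preimage_univ, Set.ncard_univ]

end Partitions

/-- A self-complementary split graph admits a rectangle partition if
and only if it is isomorphic to `Z_k` for some `k ≥ 1`. -/
theorem scs_rectangle_partition_iff {V : Type*} [Finite V] (G : SimpleGraph V)
    (hsplit : IsSplit G) (hsc : IsSelfCompl G) :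
    (∃ V1 V2 V3 V4, IsRectanglePartition G V1 V2 V3 V4) ↔
    ∃ k : ℕ, 1 ≤ k ∧ Nonempty (G ≃g Zgraph k) := by
  constructor
  · rintro ⟨V1, V2, V3, V4, hrect⟩
    obtain ⟨f, hf, rfl⟩ := hrect.exists_eq_blowup hsplit
    refine ⟨Nat.card {v // f v = 0}, card_fiber_pos hf 0, ?_⟩
    rw [zgraph_eq_blowup]
    refine nonempty_iso_blowup fun i => ?_
    rw [hsc.card_fiber_eq hf i, Nat.card_subtype_fst_eq, Nat.card_fin]
  · rintro ⟨k, hk, ⟨e⟩⟩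
    rw [zgraph_eq_blowup] at e
    have : Nonempty (Fin k) := ⟨⟨0, hk⟩⟩
    rw [e.eq_blowup]
    exact ⟨_, _, _, _, isRectanglePartition_blowup (Prod.fst_surjective.comp e.surjective)⟩
end

section
/- Let k >= 1 and let d be an integer with d > 4k - 1 - d. There exists a self-complementary graph with degree sequence (d^{2k}, (4k-1-d)^{2k}) if and only if 2k <= d <= 3k - 1. Moreover, when 2k <= d <= 3k - 1, there exists such a self-complementary graph that has an antimorphism consisting of a single cycle of length 4k. -/
open SimpleGraph

/-!
Let `A` be the `2k` vertices of degree `d` and `φ` an antimorphism. Since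
`deg φ(v) = 4k - 1 - deg v`, `φ` swaps `A` and `Aᶜ`, so `(a, b) ↦ (φ b, φ a)` matches the edges
between `A` and `Aᶜ` with the non-edges: exactly `2k²` of the `4k²` pairs are edges. Summing
degrees over `A` gives `2k·d ≤ 2k(2k - 1) + 2k²`, i.e. `d ≤ 3k - 1`.

Conversely, on `ℤ/4k` join an even vertex `v` to `v + m` for `m ∈ S` and an odd one to `v + m`
for `m ∉ S`, `m ≠ 0`. This is symmetric when `-m ∈ S ↔ m ∈ S` for even `m` and `-m ∈ S ↔ m ∉ S`
for odd `m`, and then the rotation `v ↦ v + 1`, which swaps parities, maps the graph onto its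
complement. Even vertices have degree `|S|`, and `S` can have any size from `k` to `3k - 1`:
take the odd `m < 2k`, `t` pairs `±2j`, and possibly `2k`.
-/

open Finset

namespace SimpleGraph

section

variable {V : Type*} [Fintype V] (G : SimpleGraph V) [DecidableRel G.Adj]

lemma deg_eq_degree (v : V) : deg G v = G.degree v := by
  rw [deg, ← card_neighborSet_eq_degree, Set.ncard_eq_toFinset_card', Set.toFinset_card]

lemma degMultiset_eq_map_degree : degMultiset G = univ.val.map fun v => G.degree v := by
  rw [degMultiset, Subsingleton.elim (Fintype.ofFinite V) ‹_›]
  simp only [deg_eq_degree]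

lemma card_filter_degree_eq (c : ℕ) : #{v | G.degree v = c} = (degMultiset G).count c := by
  rw [degMultiset_eq_map_degree, Multiset.count_map, card_def, filter_val]
  simp only [eq_comm]

lemma degMultiset_eq_replicate_add_replicate (p : V → Prop) [DecidablePred p] {a b : ℕ}
    (h : ∀ v, G.degree v = if p v then a else b) :
    degMultiset G = Multiset.replicate #{v | p v} a + Multiset.replicate #{v | ¬ p v} b := by
  rw [degMultiset_eq_map_degree, ← Multiset.filter_add_not p univ.val, Multiset.map_add]
  congr 1
  · rw [Multiset.map_congr rfl fun v hv => (h v).trans (if_pos (Multiset.of_mem_filter hv)),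
      Multiset.map_const']
    rfl
  · rw [Multiset.map_congr rfl fun v hv =>
      (h v).trans (if_neg (Multiset.of_mem_filter (p := fun v => ¬ p v) hv)),
      Multiset.map_const']
    rfl

end

section

variable {V : Type*} [Fintype V] [DecidableEq V] {G : SimpleGraph V} [DecidableRel G.Adj]

omit [Fintype V] [DecidableEq V] in
lemma card_interedges_eq_sum (s t : Finset V) :
    #(G.interedges s t) = ∑ a ∈ s, #{b ∈ t | G.Adj a b} := by
  rw [interedges_def, card_filter, sum_product]
  simp only [card_filter]

lemma sum_degree_le_add_card_interedges (A : Finset V) :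
    ∑ a ∈ A, G.degree a ≤ #A * (#A - 1) + #(G.interedges A Aᶜ) := by
  rw [card_interedges_eq_sum, ← smul_eq_mul, ← sum_const, ← sum_add_distrib]
  refine sum_le_sum fun a ha => ?_
  rw [← card_neighborFinset_eq_degree, neighborFinset_eq_filter,
    ← card_filter_add_card_filter_not (· ∈ A), filter_filter, filter_filter]
  gcongr
  · rw [← card_erase_of_mem ha]
    exact card_le_card fun b hb => by
      simp only [mem_filter, mem_univ, true_and] at hb
      exact mem_erase.2 ⟨hb.1.ne', hb.2⟩
  · intro b hb
    simp_all

namespace Iso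

lemma degree_apply_add_degree (φ : G ≃g Gᶜ) (v : V) :
    G.degree (φ v) + G.degree v + 1 = Fintype.card V := by
  have := φ.degree_eq v
  have := G.degree_lt_card_verts (φ v)
  rw [degree_compl] at *
  omega

variable {A : Finset V} (φ : G ≃g Gᶜ) (hA : ∀ v, φ v ∈ A ↔ v ∉ A)
include hA

lemma card_interedges_compl_eq :
    #(G.interedges A Aᶜ) = #(Gᶜ.interedges A Aᶜ) := by
  refine card_nbij' (fun e => (φ e.2, φ e.1)) (fun e => (φ.symm e.2, φ.symm e.1))
    ?_ ?_ (fun e _ => by simp) (fun e _ => by simp)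
  · rintro ⟨a, b⟩ h
    simp only [mem_coe, mk_mem_interedges_iff, mem_compl] at h ⊢
    exact ⟨(hA b).2 h.2.1, by simpa [hA] using h.1, φ.map_adj_iff.2 h.2.2.symm⟩
  · rintro ⟨a, b⟩ h
    simp only [mem_coe, mk_mem_interedges_iff, mem_compl] at h ⊢
    have hb := hA (φ.symm b)
    have ha := hA (φ.symm a)
    simp only [RelIso.apply_symm_apply] at ha hb
    refine ⟨by tauto, by tauto, ?_⟩
    rw [← φ.map_adj_iff]
    simpa [G.adj_comm] using h.2.2.symm

lemma two_mul_card_interedges_compl :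
    2 * #(G.interedges A Aᶜ) = #A * #Aᶜ := by
  rw [← G.card_interedges_add_card_interedges_compl disjoint_compl_right,
    ← card_interedges_compl_eq φ hA, two_mul]

lemma two_mul_sum_degree_le :
    2 * ∑ a ∈ A, G.degree a ≤ #A * (2 * (#A - 1) + #Aᶜ) := by
  have := G.sum_degree_le_add_card_interedges A
  have := two_mul_card_interedges_compl φ hA
  nlinarith

end Iso

end

end SimpleGraph

namespace Fin

variable {n : ℕ}

lemma even_val_add_iff (hn : Even n) (v w : Fin n) :
    Even (v + w).val ↔ (Even v.val ↔ Even w.val) := by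
  rw [val_add, Nat.even_iff, Nat.mod_mod_of_dvd _ (even_iff_two_dvd.1 hn), ← Nat.even_iff,
    Nat.even_add]

lemma even_val_add_one_iff [NeZero n] (hn : Even n) (v : Fin n) :
    Even (v + 1).val ↔ ¬ Even v.val := by
  have : 1 < n := by
    obtain ⟨m, rfl⟩ := hn
    have := NeZero.ne (m + m)
    omega
  rw [even_val_add_iff hn, val_one', Nat.mod_eq_of_lt this]
  simp

lemma card_filter_even_val [NeZero n] (hn : Even n) : #{v : Fin n | Even v.val} = n / 2 := by
  have hswap : #{v : Fin n | Even v.val} = #{v : Fin n | ¬ Even v.val} :=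
    card_equiv (Equiv.addRight 1) fun v => by
      simp only [mem_filter, mem_univ, true_and, Equiv.coe_addRight, even_val_add_one_iff hn,
        not_not]
  have := card_filter_add_card_filter_not (s := univ) fun v : Fin n => Even v.val
  rw [card_univ, Fintype.card_fin] at this
  omega

lemma card_filter_not_even_val [NeZero n] (hn : Even n) :
    #{v : Fin n | ¬ Even v.val} = n / 2 := by
  have := card_filter_add_card_filter_not (s := univ) fun v : Fin n => Even v.val
  rw [card_univ, Fintype.card_fin, card_filter_even_val hn] at this
  obtain ⟨m, rfl⟩ := hn
  omega

end Fin

namespace SimpleGraph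

variable {n : ℕ}

def IsParityConnectionSet (S : Finset (Fin n)) : Prop :=
  ∀ m : Fin n, -m ∈ S ↔ (Even m.val ↔ m ∈ S)

variable [NeZero n]

def parityCirculant (hn : Even n) (S : Finset (Fin n)) (hS : IsParityConnectionSet S) :
    SimpleGraph (Fin n) where
  Adj v w := v ≠ w ∧ (Even v.val ↔ w - v ∈ S)
  symm := ⟨fun v w ⟨hne, h⟩ => by
    refine ⟨hne.symm, ?_⟩
    have hw := Fin.even_val_add_iff hn v (w - v)
    rw [add_sub_cancel] at hw
    rw [← neg_sub, hS]
    tauto⟩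
  loopless := ⟨fun v h => h.1 rfl⟩

variable (hn : Even n) {S : Finset (Fin n)} {hS : IsParityConnectionSet S}

instance : DecidableRel (parityCirculant hn S hS).Adj :=
  fun _ _ => inferInstanceAs (Decidable (_ ∧ _))

lemma parityCirculant_adj {v w : Fin n} :
    (parityCirculant hn S hS).Adj v w ↔ v ≠ w ∧ (Even v.val ↔ w - v ∈ S) := Iff.rfl

lemma degree_parityCirculant (h0 : 0 ∉ S) (v : Fin n) :
    (parityCirculant hn S hS).degree v = if Even v.val then #S else n - 1 - #S := by
  rw [← card_neighborFinset_eq_degree, neighborFinset_eq_filter]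
  simp only [parityCirculant_adj]
  rw [card_equiv (Equiv.subRight v) (t := {m | m ≠ 0 ∧ (Even v.val ↔ m ∈ S)}) fun w => by
    simp [sub_eq_zero, eq_comm]]
  split_ifs with hv
  · congr 1
    ext m
    simp only [hv, true_iff, mem_filter, mem_univ, true_and]
    exact ⟨And.right, fun hm => ⟨ne_of_mem_of_not_mem hm h0, hm⟩⟩
  · have : ({m | m ≠ 0 ∧ (Even v.val ↔ m ∈ S)} : Finset (Fin n)) = Sᶜ.erase 0 := by
      ext m
      simp [hv, and_comm]
    rw [this, card_erase_of_mem (mem_compl.2 h0), card_compl, Fintype.card_fin]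
    omega

def parityCirculant.isoCompl (S : Finset (Fin n)) (hS : IsParityConnectionSet S) :
    parityCirculant hn S hS ≃g (parityCirculant hn S hS)ᶜ where
  toEquiv := finRotate n
  map_rel_iff' {v w} := by
    simp only [finRotate_apply, compl_adj, parityCirculant_adj, ne_eq, add_left_inj,
      add_sub_add_right_eq_sub, Fin.even_val_add_one_iff hn]
    tauto

lemma degMultiset_parityCirculant (h0 : 0 ∉ S) :
    degMultiset (parityCirculant hn S hS) =
      Multiset.replicate (n / 2) #S + Multiset.replicate (n / 2) (n - 1 - #S) := by
  rw [degMultiset_eq_replicate_add_replicate _ (fun v => Even v.val)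
    (degree_parityCirculant hn h0), Fin.card_filter_even_val hn, Fin.card_filter_not_even_val hn]

end SimpleGraph

def connectionDiffs (k t s : ℕ) : Finset ℕ :=
  {m ∈ range (4 * k) | (Odd m ∧ m < 2 * k) ∨
    (Even m ∧ 0 < m ∧ (m ≤ 2 * t ∨ 4 * k - 2 * t ≤ m ∨ (s = 1 ∧ m = 2 * k)))}

lemma card_connectionDiffs {k t s : ℕ} (ht : t < k) (hs : s ≤ 1) :
    #(connectionDiffs k t s) = k + 2 * t + s := by
  rw [← card_range (k + 2 * t + s)]
  symm
  refine card_nbij'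
    (fun i => if i < k then 2 * i + 1 else if i < k + t then 2 * (i - k) + 2
      else if i < k + 2 * t then 4 * k - 2 * (i - k - t) - 2 else 2 * k)
    (fun m => if m % 2 = 1 then m / 2 else if m ≤ 2 * t then k + m / 2 - 1
      else if m = 2 * k then k + 2 * t else k + t + (4 * k - 2 - m) / 2)
    ?_ ?_ ?_ ?_ <;>
  intro a ha <;>
  simp only [connectionDiffs, coe_range, coe_filter, Set.mem_Iio, Set.mem_ofPred_eq, mem_range,
    Nat.odd_iff, Nat.even_iff] at ha ⊢ <;>
  split_ifs <;> omega

lemma exists_connectionSet {k e : ℕ} [NeZero (4 * k)] (hk : k ≤ e) (he : e < 3 * k) :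
    ∃ S : Finset (Fin (4 * k)), 0 ∉ S ∧ SimpleGraph.IsParityConnectionSet S ∧ #S = e := by
  obtain ⟨t, s, ht, hs, rfl⟩ : ∃ t s, t < k ∧ s ≤ 1 ∧ e = k + 2 * t + s :=
    ⟨(e - k) / 2, (e - k) % 2, by omega, by omega, by omega⟩
  have hlt : ∀ m ∈ connectionDiffs k t s, m < 4 * k := fun m hm =>
    mem_range.1 (mem_filter.1 hm).1
  refine ⟨(connectionDiffs k t s).attachFin hlt, ?_, fun m => ?_,
    (card_attachFin _ _).trans (card_connectionDiffs ht hs)⟩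
  · simp [mem_attachFin, connectionDiffs]
  · have := m.isLt
    rw [mem_attachFin, mem_attachFin, Fin.val_neg]
    split_ifs with h
    · simp [h, connectionDiffs]
    · have := Fin.val_ne_zero_iff.2 h
      simp only [connectionDiffs, mem_filter, mem_range, Nat.even_iff, Nat.odd_iff]
      omega

lemma add_one_le_three_mul_of_iso_compl {k d : ℕ} (hk : 1 ≤ k) (hd : 4 * k - 1 - d < d)
    {G : SimpleGraph (Fin (4 * k))}
    (hG : degMultiset G =
      Multiset.replicate (2 * k) d + Multiset.replicate (2 * k) (4 * k - 1 - d))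
    (φ : G ≃g Gᶜ) : d + 1 ≤ 3 * k := by
  classical
  have hdeg : ∀ v, G.degree v = d ∨ G.degree v = 4 * k - 1 - d := by
    intro v
    have hv : G.degree v ∈ degMultiset G := by
      rw [G.degMultiset_eq_map_degree]
      exact Multiset.mem_map_of_mem _ (mem_univ_val v)
    simpa [hG, Multiset.mem_replicate, show 2 * k ≠ 0 by omega] using hv
  set A : Finset (Fin (4 * k)) := {v | G.degree v = d}
  have hA : #A = 2 * k := by
    rw [G.card_filter_degree_eq, hG, Multiset.count_add, Multiset.count_replicate_self,
      Multiset.count_replicate, if_neg hd.ne, add_zero]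
  have hAc : #Aᶜ = 2 * k := by
    rw [card_compl, hA, Fintype.card_fin]
    omega
  obtain ⟨v₀, hv₀⟩ : A.Nonempty := card_pos.1 (by omega)
  have hd_lt : d < 4 * k := by
    simpa [A, ← (mem_filter.1 hv₀).2] using G.degree_lt_card_verts v₀
  have hswap : ∀ v, φ v ∈ A ↔ v ∉ A := by
    intro v
    have := φ.degree_apply_add_degree v
    rw [Fintype.card_fin] at this
    simp only [A, mem_filter, mem_univ, true_and]
    rcases hdeg v with h | h <;> rcases hdeg (φ v) with h' | h' <;> omega
  have hsum : ∑ a ∈ A, G.degree a = #A * d := by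
    rw [sum_const_nat fun a ha => (mem_filter.1 ha).2]
  have key := φ.two_mul_sum_degree_le hswap
  rw [hsum, hA, hAc, mul_left_comm] at key
  have := Nat.le_of_mul_le_mul_left key (by omega : 0 < 2 * k)
  omega

lemma exists_cyclic_antimorphism {k d : ℕ} (hk : k ≤ d) (hd : d + 1 ≤ 3 * k) :
    ∃ G : SimpleGraph (Fin (4 * k)),
      degMultiset G =
        Multiset.replicate (2 * k) d + Multiset.replicate (2 * k) (4 * k - 1 - d) ∧
      ∃ σ : G ≃g Gᶜ,
        Equiv.Perm.IsCycle (σ.toEquiv : Equiv.Perm (Fin (4 * k))) ∧ ∀ v, σ v ≠ v := by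
  have : NeZero (4 * k) := ⟨by omega⟩
  have hn : Even (4 * k) := ⟨2 * k, by ring⟩
  obtain ⟨S, h0, hS, rfl⟩ := exists_connectionSet hk (by omega)
  refine ⟨parityCirculant hn S hS, ?_, parityCirculant.isoCompl hn S hS,
    isCycle_finRotate_of_le (by omega), fun v => ?_⟩
  · rw [degMultiset_parityCirculant hn h0, show 4 * k / 2 = 2 * k by omega]
  · exact Equiv.Perm.mem_support.1
      (support_finRotate_of_le (n := 4 * k) (by omega) ▸ mem_univ v)

/-- Let `k ≥ 1` and let `d` satisfy `d > 4k - 1 - d`.  There exists a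
self-complementary graph with degree sequence `(d^{2k}, (4k-1-d)^{2k})` if and only if
`2k ≤ d ≤ 3k - 1`.  Moreover, when `2k ≤ d ≤ 3k - 1`, such a self-complementary graph
exists having an antimorphism that consists of a single cycle of length `4k` (i.e., a
cyclic permutation without fixed points of all `4k` vertices). -/
theorem homogeneous_construction (k d : ℕ) (hk : 1 ≤ k) (hd : 4 * k - 1 - d < d) :
    ((∃ G : SimpleGraph (Fin (4 * k)),
        degMultiset G =
          Multiset.replicate (2 * k) d + Multiset.replicate (2 * k) (4 * k - 1 - d) ∧
        IsSelfCompl G) ↔ 2 * k ≤ d ∧ d + 1 ≤ 3 * k) ∧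
    (2 * k ≤ d → d + 1 ≤ 3 * k →
      ∃ G : SimpleGraph (Fin (4 * k)),
        degMultiset G =
          Multiset.replicate (2 * k) d + Multiset.replicate (2 * k) (4 * k - 1 - d) ∧
        ∃ σ : G ≃g Gᶜ,
          Equiv.Perm.IsCycle (σ.toEquiv : Equiv.Perm (Fin (4 * k))) ∧ ∀ v, σ v ≠ v) := by
  refine ⟨⟨fun ⟨G, hG, ⟨φ⟩⟩ => ⟨by omega, add_one_le_three_mul_of_iso_compl hk hd hG φ⟩,
    fun ⟨_, h⟩ => ?_⟩, fun _ h => exists_cyclic_antimorphism (by omega) h⟩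
  obtain ⟨G, hG, σ, -⟩ := exists_cyclic_antimorphism (by omega) h
  exact ⟨G, hG, ⟨σ⟩⟩
end

section
/- Let k >= 2 and let d be an integer with 2k <= d <= 3k - 1 and d != 5. Then the degree sequence (d^{2k}, (4k-1-d)^{2k}) is not forcibly self-complementary; that is, there exists a graph on 4k vertices with 2k vertices of degree d and 2k vertices of degree 4k-1-d that is not self-complementary. -/
open SimpleGraph

/-!
Complementation exchanges closed twins (adjacent vertices with the same other neighbours) and
open twins (distinct vertices with the same neighbours), so a graph with closed twins but without
open twins is not self-complementary.

Write `d = 2k + t` with `t < k`. The realization joins a clique on `2k` vertices `L` to a graph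
on `2k` vertices `R`; every vertex of `L` has `t + 1` neighbours in `R`, and two of them have the
same ones, so they are closed twins. There are no open twins: vertices of `L` are pairwise
adjacent, a vertex of `L` sees `2k - 1` vertices of `L` while a vertex of `R` sees at most `k`,
and distinct vertices of `R` are told apart by their neighbours. For `t ≥ 1` the edges between
`L` and `R` form a band of cyclic intervals modulo `2k`, which needs `k ≥ 3`, i.e. `d ≠ 5`; for
`t = 0` they form a shifted diagonal.
-/

open Finset Sum

section Twins

variable {V W : Type*} {G : SimpleGraph V} {H : SimpleGraph W} {u v : V}

def IsClosedTwin (G : SimpleGraph V) (u v : V) : Prop :=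
  G.Adj u v ∧ ∀ w, w ≠ u → w ≠ v → (G.Adj u w ↔ G.Adj v w)

def IsOpenTwin (G : SimpleGraph V) (u v : V) : Prop :=
  u ≠ v ∧ ∀ w, (G.Adj u w ↔ G.Adj v w)

lemma IsOpenTwin.symm (h : IsOpenTwin G u v) : IsOpenTwin G v u :=
  ⟨h.1.symm, fun w => (h.2 w).symm⟩

lemma IsOpenTwin.not_adj (h : IsOpenTwin G u v) : ¬ G.Adj u v :=
  fun huv => G.loopless.irrefl v ((h.2 v).1 huv)

lemma IsClosedTwin.isOpenTwin_compl (h : IsClosedTwin G u v) : IsOpenTwin Gᶜ u v := by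
  refine ⟨h.1.ne, fun w => ?_⟩
  by_cases hwu : w = u
  · subst hwu; simp [h.1.symm]
  by_cases hwv : w = v
  · subst hwv; simp [h.1]
  simp [compl_adj, Ne.symm hwu, Ne.symm hwv, h.2 w hwu hwv]

lemma IsOpenTwin.map (φ : G ≃g H) (h : IsOpenTwin G u v) : IsOpenTwin H (φ u) (φ v) := by
  refine ⟨φ.injective.ne h.1, fun w => ?_⟩
  have := h.2 (φ.symm w)
  rwa [← φ.map_adj_iff, ← φ.map_adj_iff, φ.apply_symm_apply] at this

theorem not_isSelfCompl_of_isClosedTwin (h : IsClosedTwin G u v)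
    (hG : ∀ a b, ¬ IsOpenTwin G a b) : ¬ IsSelfCompl G :=
  fun ⟨φ⟩ => hG _ _ (h.isOpenTwin_compl.map φ.symm)

end Twins

section Invariance

variable {V W : Type*} {G : SimpleGraph V} {H : SimpleGraph W}

def SimpleGraph.Iso.compl_s11 (φ : G ≃g H) : Gᶜ ≃g Hᶜ where
  toEquiv := φ.toEquiv
  map_rel_iff' := by
    intro a b
    simp [compl_adj, φ.injective.ne_iff, φ.map_adj_iff]

lemma IsSelfCompl.of_iso (φ : G ≃g H) (h : IsSelfCompl H) : IsSelfCompl G :=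
  ⟨(φ.trans h.some).trans φ.compl_s11.symm⟩

lemma deg_iso (φ : G ≃g H) (v : V) : deg H (φ v) = deg G v := by
  simp only [deg, ← Nat.card_coe_set_eq]
  exact Nat.card_congr (φ.mapNeighborSet v).symm

lemma degMultiset_eq_map_deg [Fintype V] (G : SimpleGraph V) :
    degMultiset G = univ.val.map (deg G) := by
  rw [degMultiset, Subsingleton.elim (Fintype.ofFinite V) ‹_›]

lemma degMultiset_iso [Fintype V] [Fintype W] (φ : G ≃g H) : degMultiset H = degMultiset G := by
  rw [degMultiset_eq_map_deg, degMultiset_eq_map_deg, ← Multiset.map_univ_val_equiv φ.toEquiv,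
    Multiset.map_map]
  exact Multiset.map_congr rfl fun v _ => deg_iso φ v

lemma deg_eq_card_filter [Fintype V] [DecidableRel G.Adj] (v : V) :
    deg G v = #{w | G.Adj v w} := by
  rw [deg, Set.ncard_eq_toFinset_card']
  congr 1
  ext w
  simp

end Invariance

section CliqueJoin

variable {α β : Type*}

lemma degMultiset_sum [Fintype α] [Fintype β] (G : SimpleGraph (α ⊕ β)) {p q : ℕ}
    (hl : ∀ a, deg G (inl a) = p) (hr : ∀ b, deg G (inr b) = q) :
    degMultiset G =
      Multiset.replicate (Fintype.card α) p + Multiset.replicate (Fintype.card β) q := by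
  rw [degMultiset_eq_map_deg, ← univ_disjSum_univ, val_disjSum, Multiset.disjSum,
    Multiset.map_add, Multiset.map_map, Multiset.map_map]
  congr 1
  · simp [hl]
  · simp [hr]

lemma card_filter_sum [Fintype α] [Fintype β] (p : α ⊕ β → Prop) [DecidablePred p] :
    #{x | p x} = #{a | p (inl a)} + #{b | p (inr b)} := by
  rw [← card_toLeft_add_card_toRight]
  congr 2 <;> ext <;> simp

def cliqueJoin (c : α → β → Prop) (H : SimpleGraph β) : SimpleGraph (α ⊕ β) where
  Adj
    | inl a, inl a' => a ≠ a'
    | inl a, inr b => c a b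
    | inr b, inl a => c a b
    | inr b, inr b' => H.Adj b b'
  symm := ⟨by
    rintro (a | b) (a' | b') h
    exacts [Ne.symm h, h, h, h.symm]⟩
  loopless := ⟨by
    rintro (a | b) h
    exacts [h rfl, H.loopless.irrefl b h]⟩

variable {c : α → β → Prop} {H : SimpleGraph β}

@[simp] lemma cliqueJoin_adj_inl_inl {a a' : α} :
    (cliqueJoin c H).Adj (inl a) (inl a') ↔ a ≠ a' := Iff.rfl

@[simp] lemma cliqueJoin_adj_inl_inr {a : α} {b : β} :
    (cliqueJoin c H).Adj (inl a) (inr b) ↔ c a b := Iff.rfl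

@[simp] lemma cliqueJoin_adj_inr_inl {a : α} {b : β} :
    (cliqueJoin c H).Adj (inr b) (inl a) ↔ c a b := Iff.rfl

@[simp] lemma cliqueJoin_adj_inr_inr {b b' : β} :
    (cliqueJoin c H).Adj (inr b) (inr b') ↔ H.Adj b b' := Iff.rfl

lemma cliqueJoin_isClosedTwin {a a' : α} (h : a ≠ a') (hc : ∀ b, c a b ↔ c a' b) :
    IsClosedTwin (cliqueJoin c H) (inl a) (inl a') := by
  refine ⟨h, ?_⟩
  rintro (x | b) hxa hxa'
  · exact iff_of_true (fun hx => hxa (congrArg inl hx).symm)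
      (fun hx => hxa' (congrArg inl hx).symm)
  · exact hc b

variable [Fintype α] [DecidableRel c]

lemma cliqueJoin_not_isOpenTwin (hcol : ∀ b, #{a | c a b} + 2 ≤ Fintype.card α)
    (hR : ∀ b b', (∀ a, c a b ↔ c a b') → (∀ x, H.Adj b x ↔ H.Adj b' x) → b = b')
    (u v : α ⊕ β) : ¬ IsOpenTwin (cliqueJoin c H) u v := by
  classical
  have not_inl_inr (a : α) (b : β) : ¬ IsOpenTwin (cliqueJoin c H) (inl a) (inr b) := by
    rintro ⟨-, hN⟩
    have hsub : univ.erase a ⊆ univ.filter (c · b) := fun a' ha' => by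
      simpa using (hN (inl a')).1 (by simpa [eq_comm] using ha')
    have hcard := card_le_card hsub
    rw [card_erase_of_mem (mem_univ a), card_univ] at hcard
    have := hcol b
    omega
  rcases u with a | b <;> rcases v with a' | b'
  · exact fun h => h.not_adj fun e => h.1 (congrArg inl e)
  · exact not_inl_inr a b'
  · exact fun h => not_inl_inr a' b h.symm
  · rintro ⟨hne, hN⟩
    exact hne (congrArg inr (hR b b' (fun a => hN (inl a)) fun x => hN (inr x)))

variable [Fintype β]

lemma deg_cliqueJoin_inl (a : α) :
    deg (cliqueJoin c H) (inl a) = Fintype.card α - 1 + #{b | c a b} := by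
  classical
  rw [deg_eq_card_filter, card_filter_sum]
  simp only [cliqueJoin_adj_inl_inl, cliqueJoin_adj_inl_inr, filter_ne, mem_univ,
    card_erase_of_mem, card_univ]

lemma deg_cliqueJoin_inr (b : β) :
    deg (cliqueJoin c H) (inr b) = #{a | c a b} + deg H b := by
  classical
  rw [deg_eq_card_filter, card_filter_sum, deg_eq_card_filter]
  simp only [cliqueJoin_adj_inr_inl, cliqueJoin_adj_inr_inr]

end CliqueJoin

lemma card_filter_fin_val (n : ℕ) (P : ℕ → Prop) [DecidablePred P] :
    #{j : Fin n | P j} = #{j ∈ range n | P j} := by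
  rw [← card_map Fin.valEmbedding]
  congr 1
  ext j
  simp only [mem_map, mem_filter, mem_univ, true_and, Fin.valEmbedding_apply, mem_range]
  exact ⟨fun ⟨i, hi, hij⟩ => hij ▸ ⟨i.isLt, hi⟩, fun ⟨hj, hP⟩ => ⟨⟨j, hj⟩, hP, rfl⟩⟩

section Cycle

/-- Vertex `a` of `L` is joined to the cyclic interval `[a, a + t]` of `R` modulo `2k`, except
that vertices `0` and `2` exchange their neighbours `0` and `t + 1`: then `0` and `1` have the same
neighbours, and every vertex still has `t + 1` neighbours on the other side. -/
def cycleCross (k t a j : ℕ) : Prop :=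
  Xor ((a ≤ j ∧ j ≤ a + t) ∨ j + 2 * k ≤ a + t) ((a = 0 ∨ a = 2) ∧ (j = 0 ∨ j = t + 1))

/-- `x` and `y` are at cyclic distance more than `t` modulo `2k` and are not antipodal. -/
def cycleFar (k t x y : ℕ) : Prop :=
  (x + t < y ∨ y + t < x) ∧ x + t < y + 2 * k ∧ y + t < x + 2 * k ∧ x + k ≠ y ∧ y + k ≠ x

instance (k t a j : ℕ) : Decidable (cycleCross k t a j) := by
  unfold cycleCross Xor; infer_instance

instance (k t x y : ℕ) : Decidable (cycleFar k t x y) := by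
  unfold cycleFar; infer_instance

variable {k t : ℕ}

lemma card_cycleCross_row {a : ℕ} (ht : 1 ≤ t) (htk : t + 1 ≤ k) (ha : a < 2 * k) :
    #{j ∈ range (2 * k) | cycleCross k t a j} = t + 1 := by
  by_cases ha0 : a = 0
  · subst ha0
    have hrow : {j ∈ range (2 * k) | cycleCross k t 0 j} = Icc 1 (t + 1) := by
      ext j
      simp only [mem_filter, mem_range, mem_Icc]
      unfold cycleCross Xor
      omega
    rw [hrow, Nat.card_Icc]
    omega
  by_cases ha2 : a = 2
  · subst ha2
    have hrow : {j ∈ range (2 * k) | cycleCross k t 2 j} =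
        insert 0 (insert (t + 2) (Ico 2 (t + 1))) := by
      ext j
      simp only [mem_filter, mem_range, mem_insert, mem_Ico]
      unfold cycleCross Xor
      omega
    rw [hrow, card_insert_of_notMem (by simp only [mem_insert, mem_Ico]; omega),
      card_insert_of_notMem (by simp only [mem_Ico]; omega), Nat.card_Ico]
    omega
  by_cases hwrap : a + t < 2 * k
  · have hrow : {j ∈ range (2 * k) | cycleCross k t a j} = Icc a (a + t) := by
      ext j
      simp only [mem_filter, mem_range, mem_Icc]
      unfold cycleCross Xor
      omega
    rw [hrow, Nat.card_Icc]
    omega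
  · have hrow : {j ∈ range (2 * k) | cycleCross k t a j} =
        Ico a (2 * k) ∪ range (a + t + 1 - 2 * k) := by
      ext j
      simp only [mem_filter, mem_range, mem_union, mem_Ico]
      unfold cycleCross Xor
      omega
    rw [hrow, card_union_of_disjoint, Nat.card_Ico, card_range]
    · omega
    · rw [Finset.disjoint_left]
      intro j hj hj'
      simp only [mem_Ico, mem_range] at hj hj'
      omega

lemma card_cycleCross_col {x : ℕ} (ht : 1 ≤ t) (htk : t + 1 ≤ k) (hx : x < 2 * k) :
    #{i ∈ range (2 * k) | cycleCross k t i x} = t + 1 := by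
  by_cases hx0 : x = 0
  · subst hx0
    have hcol :
        {i ∈ range (2 * k) | cycleCross k t i 0} = insert 2 (Ico (2 * k - t) (2 * k)) := by
      ext i
      simp only [mem_filter, mem_range, mem_insert, mem_Ico]
      unfold cycleCross Xor
      omega
    rw [hcol, card_insert_of_notMem (by simp only [mem_Ico]; omega), Nat.card_Ico]
    omega
  by_cases hxt : x = t + 1
  · subst hxt
    have hcol : {i ∈ range (2 * k) | cycleCross k t i (t + 1)} = (range (t + 2)).erase 2 := by
      ext i
      simp only [mem_filter, mem_range, mem_erase]
      unfold cycleCross Xor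
      omega
    rw [hcol, card_erase_of_mem (by simp only [mem_range]; omega), card_range]
    omega
  by_cases hwrap : t ≤ x
  · have hcol : {i ∈ range (2 * k) | cycleCross k t i x} = Icc (x - t) x := by
      ext i
      simp only [mem_filter, mem_range, mem_Icc]
      unfold cycleCross Xor
      omega
    rw [hcol, Nat.card_Icc]
    omega
  · have hcol : {i ∈ range (2 * k) | cycleCross k t i x} =
        range (x + 1) ∪ Ico (2 * k + x - t) (2 * k) := by
      ext i
      simp only [mem_filter, mem_range, mem_union, mem_Ico]
      unfold cycleCross Xor
      omega
    rw [hcol, card_union_of_disjoint, Nat.card_Ico, card_range]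
    · omega
    · rw [Finset.disjoint_left]
      intro i hi hi'
      simp only [mem_Ico, mem_range] at hi hi'
      omega

lemma card_cycleFar {x : ℕ} (htk : t + 1 ≤ k) (hx : x < 2 * k) :
    #{y ∈ range (2 * k) | cycleFar k t x y} = 2 * k - 2 - 2 * t := by
  have hsplit :=
    card_filter_add_card_filter_not (s := range (2 * k)) (p := fun y => cycleFar k t x y)
  suffices hnear : #{y ∈ range (2 * k) | ¬ cycleFar k t x y} = 2 * t + 2 by
    rw [card_range] at hsplit
    omega
  by_cases hmid : t ≤ x ∧ x + t < 2 * k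
  · have hnear : {y ∈ range (2 * k) | ¬ cycleFar k t x y} =
        insert (if x < k then x + k else x - k) (Icc (x - t) (x + t)) := by
      ext y
      simp only [mem_filter, mem_range, mem_insert, mem_Icc]
      unfold cycleFar
      split_ifs <;> omega
    rw [hnear, card_insert_of_notMem (by simp only [mem_Icc]; split_ifs <;> omega), Nat.card_Icc]
    omega
  by_cases hlow : x < t
  · have hnear : {y ∈ range (2 * k) | ¬ cycleFar k t x y} =
        insert (x + k) (range (x + t + 1) ∪ Ico (2 * k + x - t) (2 * k)) := by
      ext y
      simp only [mem_filter, mem_range, mem_insert, mem_union, mem_Ico]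
      unfold cycleFar
      omega
    rw [hnear, card_insert_of_notMem (by simp only [mem_union, mem_range, mem_Ico]; omega),
      card_union_of_disjoint, card_range, Nat.card_Ico]
    · omega
    · rw [Finset.disjoint_left]
      intro y hy hy'
      simp only [mem_Ico, mem_range] at hy hy'
      omega
  · have hnear : {y ∈ range (2 * k) | ¬ cycleFar k t x y} =
        insert (x - k) (Icc (x - t) (2 * k - 1) ∪ range (x + t + 1 - 2 * k)) := by
      ext y
      simp only [mem_filter, mem_range, mem_insert, mem_union, mem_Icc]
      unfold cycleFar
      omega
    rw [hnear, card_insert_of_notMem (by simp only [mem_union, mem_Icc, mem_range]; omega),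
      card_union_of_disjoint, card_range, Nat.card_Icc]
    · omega
    · rw [Finset.disjoint_left]
      intro y hy hy'
      simp only [mem_Icc, mem_range] at hy hy'
      omega

lemma cycleCross_zero_iff_one (htk : t + 1 ≤ k) (j : ℕ) :
    cycleCross k t 0 j ↔ cycleCross k t 1 j := by
  unfold cycleCross Xor
  omega

lemma cycle_not_twin_zero {y : ℕ} (hk : 3 ≤ k) (htk : t + 1 ≤ k) (hy : y < 2 * k)
    (hy0 : y ≠ 0) (hc : ∀ i < 2 * k, cycleCross k t i 0 ↔ cycleCross k t i y)
    (hf : ∀ z < 2 * k, cycleFar k t 0 z ↔ cycleFar k t y z) : False := by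
  have hfy := hf y hy
  have hc0 := hc 0 (by omega)
  have hck := hc k (by omega)
  have hcl := hc (2 * k - 1) (by omega)
  have hcyt := hc (y - t) (by omega)
  unfold cycleCross Xor cycleFar at *
  omega

lemma cycle_not_twin_succ {y : ℕ} (hk : 3 ≤ k) (htk : t + 1 ≤ k) (hy : y < 2 * k) (hyt : y ≠ t + 1)
    (hc : ∀ i < 2 * k, cycleCross k t i (t + 1) ↔ cycleCross k t i y)
    (hf : ∀ z < 2 * k, cycleFar k t (t + 1) z ↔ cycleFar k t y z) : False := by
  have hc0 := hc 0 (by omega)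
  have hct := hc (t + 1) (by omega)
  have hcy := hc y hy
  -- for `t = 1` the columns `1` and `2` coincide; `k + 1` is far from `2` but antipodal to `1`
  have hfk := hf (k + 1) (by omega)
  have hfy := hf y hy
  unfold cycleCross Xor cycleFar at *
  omega

lemma cycle_not_twin {x y : ℕ} (hk : 3 ≤ k) (htk : t + 1 ≤ k) (hx : x < 2 * k)
    (hy : y < 2 * k) (hxy : x ≠ y) (hc : ∀ i < 2 * k, cycleCross k t i x ↔ cycleCross k t i y)
    (hf : ∀ z < 2 * k, cycleFar k t x z ↔ cycleFar k t y z) : False := by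
  wlog hx0 : x = 0 ∨ (x = t + 1 ∧ y ≠ 0) generalizing x y
  · by_cases hy0 : y = 0 ∨ (y = t + 1 ∧ x ≠ 0)
    · exact this hy hx hxy.symm (fun i hi => (hc i hi).symm) (fun z hz => (hf z hz).symm) hy0
    -- two columns other than `0` and `t + 1` are different cyclic intervals
    have hcx := hc x hx
    have hcy := hc y hy
    unfold cycleCross Xor at hcx hcy
    omega
  rcases hx0 with rfl | ⟨rfl, hy0⟩
  · exact cycle_not_twin_zero hk htk hy hxy.symm hc hf
  · exact cycle_not_twin_succ hk htk hy hxy.symm hc hf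

def cycleFarGraph (k t : ℕ) : SimpleGraph (Fin (2 * k)) where
  Adj x y := cycleFar k t x y
  symm := ⟨fun x y h => by unfold cycleFar at *; omega⟩
  loopless := ⟨fun x h => by unfold cycleFar at h; omega⟩

instance (k t : ℕ) : DecidableRel (cycleFarGraph k t).Adj :=
  fun x y => inferInstanceAs (Decidable (cycleFar k t x y))

lemma deg_cycleFarGraph (htk : t + 1 ≤ k) (x : Fin (2 * k)) :
    deg (cycleFarGraph k t) x = 2 * k - 2 - 2 * t := by
  rw [deg_eq_card_filter]
  exact (card_filter_fin_val _ (cycleFar k t x)).trans (card_cycleFar htk x.isLt)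

def cycleJoin (k t : ℕ) : SimpleGraph (Fin (2 * k) ⊕ Fin (2 * k)) :=
  cliqueJoin (fun a j : Fin (2 * k) => cycleCross k t a j) (cycleFarGraph k t)

lemma degMultiset_cycleJoin (ht : 1 ≤ t) (htk : t + 1 ≤ k) :
    degMultiset (cycleJoin k t) =
      Multiset.replicate (2 * k) (2 * k + t) + Multiset.replicate (2 * k) (2 * k - 1 - t) := by
  rw [degMultiset_sum _ (p := 2 * k + t) (q := 2 * k - 1 - t), Fintype.card_fin]
  · intro a
    rw [cycleJoin, deg_cliqueJoin_inl, Fintype.card_fin,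
      card_filter_fin_val (P := cycleCross k t a), card_cycleCross_row ht htk a.isLt]
    omega
  · intro x
    rw [cycleJoin, deg_cliqueJoin_inr, deg_cycleFarGraph htk,
      card_filter_fin_val (P := fun i => cycleCross k t i x), card_cycleCross_col ht htk x.isLt]
    omega

lemma not_isSelfCompl_cycleJoin (hk : 3 ≤ k) (ht : 1 ≤ t) (htk : t + 1 ≤ k) :
    ¬ IsSelfCompl (cycleJoin k t) := by
  refine not_isSelfCompl_of_isClosedTwin (u := inl ⟨0, by omega⟩) (v := inl ⟨1, by omega⟩)
    (cliqueJoin_isClosedTwin (by simp) fun j => cycleCross_zero_iff_one htk j) ?_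
  refine cliqueJoin_not_isOpenTwin (fun x => ?_) fun x y hc hf => Fin.ext (by_contra fun hxy => ?_)
  · rw [Fintype.card_fin, card_filter_fin_val (P := fun i => cycleCross k t i x),
      card_cycleCross_col ht htk x.isLt]
    omega
  · exact cycle_not_twin hk htk x.isLt y.isLt hxy (fun i hi => hc ⟨i, hi⟩) fun z hz => hf ⟨z, hz⟩

end Cycle

section Shift

/-- Vertex `a ≥ 2` of `L` is joined to vertex `a - 1` of `R`, and vertices `0` and `1` both to
`0`; so `0 ∈ R` has two neighbours in `L`, `2k - 1 ∈ R` none and the others one. -/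
def shiftCross (a j : ℕ) : Prop := (a ≤ 1 ∧ j = 0) ∨ (2 ≤ a ∧ j + 1 = a)

/-- The edges `{0, 1}`, `{0, 2}` and a perfect matching of `3, …, 2k - 2`, removed from the
complete graph on `R` to make up for the uneven degrees of `shiftCross` on `R`. -/
def shiftGap (k x y : ℕ) : Prop :=
  (x = 0 ∧ (y = 1 ∨ y = 2)) ∨ (3 ≤ x ∧ x % 2 = 1 ∧ y = x + 1 ∧ y ≤ 2 * k - 2)

def shiftInner (k x y : ℕ) : Prop := x ≠ y ∧ ¬ shiftGap k x y ∧ ¬ shiftGap k y x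

instance (a j : ℕ) : Decidable (shiftCross a j) := by
  unfold shiftCross; infer_instance

instance (k x y : ℕ) : Decidable (shiftInner k x y) := by
  unfold shiftInner shiftGap; infer_instance

variable {k : ℕ}

lemma card_shiftCross_row {a : ℕ} (ha : a < 2 * k) :
    #{j ∈ range (2 * k) | shiftCross a j} = 1 := by
  rw [card_eq_one]
  refine ⟨if a ≤ 1 then 0 else a - 1, ?_⟩
  ext j
  simp only [mem_filter, mem_range, mem_singleton]
  unfold shiftCross
  split_ifs <;> omega

lemma shiftCross_col_eq {x : ℕ} (hx : x < 2 * k) :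
    {i ∈ range (2 * k) | shiftCross i x} =
      if x = 0 then {0, 1} else if x + 1 < 2 * k then {x + 1} else ∅ := by
  ext i
  simp only [mem_filter, mem_range]
  unfold shiftCross
  split_ifs <;> simp only [mem_insert, mem_singleton, notMem_empty, iff_false] <;> omega

lemma card_shiftCross_col_le {x : ℕ} (hx : x < 2 * k) :
    #{i ∈ range (2 * k) | shiftCross i x} ≤ 2 := by
  rw [shiftCross_col_eq hx]
  split_ifs <;> simp

lemma card_not_shiftInner {x : ℕ} (hk : 2 ≤ k) (hx : x < 2 * k) :
    #{y ∈ range (2 * k) | ¬ shiftInner k x y} = #{i ∈ range (2 * k) | shiftCross i x} + 1 := by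
  rw [shiftCross_col_eq hx]
  by_cases hx0 : x = 0
  · have hnon : {y ∈ range (2 * k) | ¬ shiftInner k x y} = {0, 1, 2} := by
      ext y
      simp only [mem_filter, mem_range, mem_insert, mem_singleton]
      unfold shiftInner shiftGap
      omega
    rw [hnon, if_pos hx0]
    rfl
  by_cases hlast : x + 1 < 2 * k
  · have hnon : {y ∈ range (2 * k) | ¬ shiftInner k x y} =
        {x, if x ≤ 2 then 0 else if x % 2 = 1 then x + 1 else x - 1} := by
      ext y
      simp only [mem_filter, mem_range, mem_insert, mem_singleton]
      unfold shiftInner shiftGap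
      split_ifs <;> omega
    rw [hnon, if_neg hx0, if_pos hlast, card_pair (by split_ifs <;> omega), card_singleton]
  · have hnon : {y ∈ range (2 * k) | ¬ shiftInner k x y} = {x} := by
      ext y
      simp only [mem_filter, mem_range, mem_singleton]
      unfold shiftInner shiftGap
      omega
    rw [hnon, if_neg hx0, if_neg hlast, card_singleton, card_empty]

lemma eq_of_shiftCross_col_iff {x y : ℕ} (hx : x < 2 * k) (hy : y < 2 * k)
    (hc : ∀ i < 2 * k, shiftCross i x ↔ shiftCross i y) : x = y := by
  have hc0 := hc 0 (by omega)
  rcases lt_trichotomy x y with hxy | hxy | hxy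
  · have hcx := hc (x + 1) (by omega)
    unfold shiftCross at hc0 hcx
    omega
  · exact hxy
  · have hcy := hc (y + 1) (by omega)
    unfold shiftCross at hc0 hcy
    omega

def shiftInnerGraph (k : ℕ) : SimpleGraph (Fin (2 * k)) where
  Adj x y := shiftInner k x y
  symm := ⟨fun _ _ h => ⟨h.1.symm, h.2.2, h.2.1⟩⟩
  loopless := ⟨fun _ h => h.1 rfl⟩

instance (k : ℕ) : DecidableRel (shiftInnerGraph k).Adj :=
  fun x y => inferInstanceAs (Decidable (shiftInner k x y))

lemma card_shiftCross_col_add_deg_shiftInnerGraph (hk : 2 ≤ k) (x : Fin (2 * k)) :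
    #{i ∈ range (2 * k) | shiftCross i x} + deg (shiftInnerGraph k) x = 2 * k - 1 := by
  have hdeg : deg (shiftInnerGraph k) x = #{y ∈ range (2 * k) | shiftInner k x y} :=
    (deg_eq_card_filter x).trans (card_filter_fin_val _ (shiftInner k x))
  have hsplit :=
    card_filter_add_card_filter_not (s := range (2 * k)) (p := fun y => shiftInner k x y)
  rw [card_range, card_not_shiftInner hk x.isLt] at hsplit
  omega

def shiftJoin (k : ℕ) : SimpleGraph (Fin (2 * k) ⊕ Fin (2 * k)) :=
  cliqueJoin (fun a j : Fin (2 * k) => shiftCross a j) (shiftInnerGraph k)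

lemma degMultiset_shiftJoin (hk : 2 ≤ k) :
    degMultiset (shiftJoin k) =
      Multiset.replicate (2 * k) (2 * k) + Multiset.replicate (2 * k) (2 * k - 1) := by
  rw [degMultiset_sum _ (p := 2 * k) (q := 2 * k - 1), Fintype.card_fin]
  · intro a
    rw [shiftJoin, deg_cliqueJoin_inl, Fintype.card_fin, card_filter_fin_val (P := shiftCross a),
      card_shiftCross_row a.isLt]
    omega
  · intro x
    rw [shiftJoin, deg_cliqueJoin_inr, card_filter_fin_val (P := fun i => shiftCross i x),
      card_shiftCross_col_add_deg_shiftInnerGraph hk]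

lemma not_isSelfCompl_shiftJoin (hk : 2 ≤ k) : ¬ IsSelfCompl (shiftJoin k) := by
  refine not_isSelfCompl_of_isClosedTwin (u := inl ⟨0, by omega⟩) (v := inl ⟨1, by omega⟩)
    (cliqueJoin_isClosedTwin (by simp) fun j => by simp [shiftCross]) ?_
  refine cliqueJoin_not_isOpenTwin (fun x => ?_) fun x y hc _ =>
    Fin.ext (eq_of_shiftCross_col_iff x.isLt y.isLt fun i hi => hc ⟨i, hi⟩)
  rw [Fintype.card_fin, card_filter_fin_val (P := fun i => shiftCross i x)]
  have := card_shiftCross_col_le x.isLt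
  omega

end Shift

/-- Let `k ≥ 2` and let `d` satisfy `2k ≤ d ≤ 3k - 1` and `d ≠ 5`.
Then the degree sequence `(d^{2k}, (4k-1-d)^{2k})` is not forcibly self-complementary:
there exists a graph on `4k` vertices with `2k` vertices of degree `d` and `2k`
vertices of degree `4k - 1 - d` that is not self-complementary. -/
theorem two_degrees_not_forcibly (k d : ℕ) (hk : 2 ≤ k)
    (h1 : 2 * k ≤ d) (h2 : d + 1 ≤ 3 * k) (h5 : d ≠ 5) :
    ∃ G : SimpleGraph (Fin (4 * k)),
      degMultiset G =
        Multiset.replicate (2 * k) d + Multiset.replicate (2 * k) (4 * k - 1 - d) ∧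
      ¬ IsSelfCompl G := by
  obtain ⟨G, hdeg, hG⟩ : ∃ G : SimpleGraph (Fin (2 * k) ⊕ Fin (2 * k)),
      degMultiset G =
        Multiset.replicate (2 * k) d + Multiset.replicate (2 * k) (4 * k - 1 - d) ∧
      ¬ IsSelfCompl G := by
    obtain ⟨t, rfl⟩ : ∃ t, d = 2 * k + t := ⟨d - 2 * k, by omega⟩
    rw [show 4 * k - 1 - (2 * k + t) = 2 * k - 1 - t by omega]
    rcases Nat.eq_zero_or_pos t with rfl | ht
    · exact ⟨shiftJoin k, degMultiset_shiftJoin hk, not_isSelfCompl_shiftJoin hk⟩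
    · exact ⟨cycleJoin k t, degMultiset_cycleJoin ht (by omega),
        not_isSelfCompl_cycleJoin (by omega) ht (by omega)⟩
  have hcard : Fintype.card (Fin (2 * k) ⊕ Fin (2 * k)) = 4 * k := by
    rw [Fintype.card_sum, Fintype.card_fin]
    omega
  let φ := G.overFinIso hcard
  exact ⟨G.overFin hcard, (degMultiset_iso φ).trans hdeg, fun h => hG (h.of_iso φ)⟩
end
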